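/- (Existence of the Generalized Singular Value Decomposition.) Let Z be a real n×p matrix of rank r ≥ 1, and let N (n×n) and M (p×p) be real symmetric positive definite matrices. Then there exist a real n×r matrix U, a real p×r matrix V, and real numbers σ_1 ≥ σ_2 ≥ … ≥ σ_r > 0 such that Z = U diag(σ_1, …, σ_r) Vᵀ, Uᵀ N U = I_r and Vᵀ M V = I_r. -/

import Mathlib

/-!
Whitening reduces the statement to the ordinary compact SVD: if `S² = N` and `T² = M` with `S`, `T`
symmetric and invertible, then `A = S Z T` has rank `r`, and a compact SVD `A = U Σ Vᵀ` with
`UᵀU = VᵀV = 1` gives `Z = (S⁻¹U) Σ (T⁻¹V)ᵀ` with `(S⁻¹U)ᵀ N (S⁻¹U) = 1` and `(T⁻¹V)ᵀ M (T⁻¹V) = 1`.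
The compact SVD comes from the spectral decomposition of `AᵀA`, eigenvalues sorted decreasingly:
exactly `r` of them are positive, their eigenvectors form `V`, `Σ² = VᵀAᵀAV`, and `U = AVΣ⁻¹`.
That `A = U Σ Vᵀ` amounts to `A VVᵀ = A`, which follows from `AᵀA VVᵀ = AᵀA`.
-/

open Matrix

theorem Fin.sum_univ_castLE_of_eq_zero {M : Type*} [AddCommMonoid M] {r p : ℕ} (h : r ≤ p)
    {f : Fin p → M} (hf : ∀ i : Fin p, r ≤ (i : ℕ) → f i = 0) :
    ∑ α : Fin r, f (Fin.castLE h α) = ∑ i, f i := by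
  calc ∑ α : Fin r, f (Fin.castLE h α) = ∑ i ∈ Finset.univ.map (Fin.castLEEmb h), f i := by
        rw [Finset.sum_map]; rfl
    _ = ∑ i, f i := Finset.sum_subset (Finset.subset_univ _) fun i _ hi => hf i <| by
        by_contra hlt
        exact hi (Finset.mem_map.2 ⟨⟨i, by omega⟩, Finset.mem_univ _, rfl⟩)

namespace Matrix

variable {m n k : Type*} [Fintype m] [Fintype n] [Fintype k]

theorem mul_eq_self_of_transpose_mul_self_mul_eq {A : Matrix m n ℝ} {P : Matrix n n ℝ}
    (hP : Pᵀ = P) (h : Aᵀ * A * P = Aᵀ * A) : A * P = A := by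
  have h' : P * (Aᵀ * A) = Aᵀ * A := by
    simpa only [transpose_mul, transpose_transpose, hP, Matrix.mul_assoc] using
      congrArg transpose h
  have hzero : (A * P - A)ᵀ * (A * P - A) = 0 := by
    calc (A * P - A)ᵀ * (A * P - A)
        = P * (Aᵀ * A) * P - Aᵀ * A * P - (P * (Aᵀ * A) - Aᵀ * A) := by
          simp only [transpose_sub, transpose_mul, hP, Matrix.sub_mul, Matrix.mul_sub,
            Matrix.mul_assoc]
      _ = 0 := by simp only [h', h, sub_self]
  rw [← conjTranspose_eq_transpose_of_trivial, conjTranspose_mul_self_eq_zero] at hzero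
  exact sub_eq_zero.1 hzero

theorem exists_svd_of_transpose_mul_self_eq [DecidableEq k]
    {A : Matrix m n ℝ} {V : Matrix n k ℝ} {σ : k → ℝ} (hσ : ∀ i, σ i ≠ 0) (hV : Vᵀ * V = 1)
    (hA : Aᵀ * A = V * (diagonal σ * diagonal σ) * Vᵀ) :
    ∃ U : Matrix m k ℝ, Uᵀ * U = 1 ∧ A = U * diagonal σ * Vᵀ := by
  have hσinv : diagonal σ⁻¹ * diagonal σ = 1 := by
    rw [diagonal_mul_diagonal, ← diagonal_one]
    exact congrArg diagonal (funext fun i => inv_mul_cancel₀ (hσ i))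
  have hσinv' : diagonal σ * diagonal σ⁻¹ = 1 := by
    rw [diagonal_mul_diagonal, ← diagonal_one]
    exact congrArg diagonal (funext fun i => mul_inv_cancel₀ (hσ i))
  have hVAAV : Vᵀ * (Aᵀ * A) * V = diagonal σ * diagonal σ := by
    calc Vᵀ * (Aᵀ * A) * V = Vᵀ * V * (diagonal σ * diagonal σ) * (Vᵀ * V) := by
          simp only [hA, Matrix.mul_assoc]
      _ = diagonal σ * diagonal σ := by rw [hV, Matrix.one_mul, Matrix.mul_one]
  have hAVV : A * (V * Vᵀ) = A := by
    refine mul_eq_self_of_transpose_mul_self_mul_eq (by rw [transpose_mul, transpose_transpose]) ?_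
    rw [hA, Matrix.mul_assoc, ← Matrix.mul_assoc Vᵀ V, hV, Matrix.one_mul]
  refine ⟨A * V * diagonal σ⁻¹, ?_, ?_⟩
  · calc (A * V * diagonal σ⁻¹)ᵀ * (A * V * diagonal σ⁻¹)
        = diagonal σ⁻¹ * (Vᵀ * (Aᵀ * A) * V) * diagonal σ⁻¹ := by
          simp only [transpose_mul, diagonal_transpose, Matrix.mul_assoc]
      _ = 1 := by
          rw [hVAAV, ← Matrix.mul_assoc, hσinv, Matrix.one_mul, hσinv']
  · calc A = A * V * (diagonal σ⁻¹ * diagonal σ) * Vᵀ := by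
          rw [hσinv, Matrix.mul_one, Matrix.mul_assoc, hAVV]
      _ = A * V * diagonal σ⁻¹ * diagonal σ * Vᵀ := by simp only [Matrix.mul_assoc]

theorem submatrix_castLE_mul_diagonal_mul_transpose {R m : Type*} [CommSemiring R] {r p : ℕ}
    (h : r ≤ p) (W : Matrix m (Fin p) R) {μ : Fin p → R}
    (hμ : ∀ i : Fin p, r ≤ (i : ℕ) → μ i = 0) :
    W.submatrix id (Fin.castLE h) * diagonal (μ ∘ Fin.castLE h) *
      (W.submatrix id (Fin.castLE h))ᵀ = W * diagonal μ * Wᵀ := by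
  ext i k
  rw [mul_apply, mul_apply]
  simp only [mul_diagonal, submatrix_apply, transpose_apply, id, Function.comp_apply]
  exact Fin.sum_univ_castLE_of_eq_zero h (f := fun j => W i j * μ j * W k j) fun j hj => by
    rw [hμ j hj, mul_zero, zero_mul]

theorem IsHermitian.exists_antitone_spectral {p : ℕ} {B : Matrix (Fin p) (Fin p) ℝ}
    (hB : B.IsHermitian) :
    ∃ (W : Matrix (Fin p) (Fin p) ℝ) (π : Equiv.Perm (Fin p)),
      Wᵀ * W = 1 ∧ Antitone (hB.eigenvalues ∘ π) ∧
        B = W * diagonal (hB.eigenvalues ∘ π) * Wᵀ := by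
  set W₀ : Matrix (Fin p) (Fin p) ℝ := ↑hB.eigenvectorUnitary
  have hW₀ : W₀ᵀ * W₀ = 1 := by
    rw [← conjTranspose_eq_transpose_of_trivial, ← star_eq_conjTranspose]
    exact (Unitary.mem_iff.1 hB.eigenvectorUnitary.2).1
  set π := Tuple.sort (OrderDual.toDual ∘ hB.eigenvalues)
  refine ⟨W₀.submatrix id π, π, ?_, ?_, ?_⟩
  · rw [transpose_submatrix, ← submatrix_mul _ _ _ _ _ Function.bijective_id, hW₀,
      submatrix_one_equiv]
  · exact monotone_toDual_comp_iff.1 (Tuple.monotone_sort (OrderDual.toDual ∘ hB.eigenvalues))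
  · have hspec : B = W₀ * diagonal hB.eigenvalues * W₀ᵀ := by
      rw [← conjTranspose_eq_transpose_of_trivial, ← star_eq_conjTranspose]
      simpa using hB.spectral_theorem
    rw [transpose_submatrix, ← submatrix_diagonal_equiv, submatrix_mul_equiv, submatrix_mul_equiv,
      submatrix_id_id, ← hspec]

theorem PosSemidef.exists_compact_spectral {p r : ℕ} {B : Matrix (Fin p) (Fin p) ℝ}
    (hB : B.PosSemidef) (hrank : B.rank = r) :
    ∃ (V : Matrix (Fin p) (Fin r) ℝ) (τ : Fin r → ℝ),
      (∀ α, 0 < τ α) ∧ Antitone τ ∧ Vᵀ * V = 1 ∧ B = V * diagonal τ * Vᵀ := by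
  have hrp : r ≤ p := by simpa [hrank] using B.rank_le_width
  obtain ⟨W, π, hW, hanti, hspec⟩ := hB.isHermitian.exists_antitone_spectral
  set μ := hB.isHermitian.eigenvalues ∘ π
  have hcount : (Finset.univ.filter fun i => 0 < μ i).card = r := by
    rw [← hrank, hB.isHermitian.rank_eq_card_non_zero_eigs,
      ← Fintype.card_congr (π.subtypeEquiv fun _ => Iff.rfl), Fintype.card_subtype]
    exact congrArg Finset.card
      (Finset.filter_congr fun i _ => (hB.eigenvalues_nonneg _).lt_iff_ne')
  have hpos (i : Fin p) : 0 < μ i ↔ (i : ℕ) < r := by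
    rw [← hcount]; exact (Tuple.lt_card_gt_iff_apply_gt_of_antitone hanti).symm
  refine ⟨W.submatrix id (Fin.castLE hrp), μ ∘ Fin.castLE hrp, fun α => (hpos _).2 α.2,
    hanti.comp_monotone (Fin.strictMono_castLE hrp).monotone, ?_, ?_⟩
  · rw [transpose_submatrix, ← submatrix_mul _ _ _ _ _ Function.bijective_id, hW,
      submatrix_one _ (Fin.castLE_injective hrp)]
  · rw [submatrix_castLE_mul_diagonal_mul_transpose hrp W, ← hspec]
    intro i hi
    exact le_antisymm (not_lt.1 ((hpos i).not.2 hi.not_gt)) (hB.eigenvalues_nonneg _)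

theorem exists_compact_svd {n p r : ℕ} {A : Matrix (Fin n) (Fin p) ℝ} (hrank : A.rank = r) :
    ∃ (U : Matrix (Fin n) (Fin r) ℝ) (V : Matrix (Fin p) (Fin r) ℝ) (σ : Fin r → ℝ),
      (∀ α, 0 < σ α) ∧ Antitone σ ∧ A = U * diagonal σ * Vᵀ ∧ Uᵀ * U = 1 ∧ Vᵀ * V = 1 := by
  have hAA : (Aᵀ * A).PosSemidef := by
    simpa only [conjTranspose_eq_transpose_of_trivial] using posSemidef_conjTranspose_mul_self A
  obtain ⟨V, τ, hτ, hanti, hV, hspec⟩ :=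
    hAA.exists_compact_spectral ((rank_transpose_mul_self A).trans hrank)
  have hσσ : diagonal τ = diagonal (fun α => √(τ α)) * diagonal (fun α => √(τ α)) := by
    rw [diagonal_mul_diagonal]
    exact congrArg diagonal (funext fun α => (Real.mul_self_sqrt (hτ α).le).symm)
  obtain ⟨U, hU, hA⟩ := exists_svd_of_transpose_mul_self_eq
    (fun α => (Real.sqrt_pos.2 (hτ α)).ne') hV (hσσ ▸ hspec)
  exact ⟨U, V, _, fun α => Real.sqrt_pos.2 (hτ α), Real.sqrt_monotone.comp_antitone hanti,
    hA, hU, hV⟩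

theorem PosDef.exists_symm_sqrt {n : Type*} [Fintype n] [DecidableEq n] {N : Matrix n n ℝ}
    (hN : N.PosDef) : ∃ S : Matrix n n ℝ, Sᵀ = S ∧ S * S = N ∧ IsUnit S.det := by
  open scoped MatrixOrder in
  refine ⟨CFC.sqrt N, ?_, CFC.sqrt_mul_sqrt_self N hN.posSemidef.nonneg, ?_⟩
  · rw [← conjTranspose_eq_transpose_of_trivial]; exact (CFC.sqrt_nonneg N).isSelfAdjoint
  · rw [← isUnit_iff_isUnit_det, CFC.isUnit_sqrt_iff_isStrictlyPositive,
      isStrictlyPositive_iff_posDef]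
    exact hN

theorem transpose_inv_mul_mul_inv_mul {R n k : Type*} [CommRing R] [Fintype n] [DecidableEq n]
    [Fintype k] {S N : Matrix n n R} (hS : Sᵀ = S) (hSN : S * S = N) (hdet : IsUnit S.det)
    (U : Matrix n k R) : (S⁻¹ * U)ᵀ * N * (S⁻¹ * U) = Uᵀ * U := by
  rw [transpose_mul, transpose_nonsing_inv, hS, ← hSN]
  simp only [Matrix.mul_assoc]
  rw [mul_nonsing_inv_cancel_left S U hdet, nonsing_inv_mul_cancel_left S U hdet]

end Matrix

theorem gsvd_exists_general (n p r : ℕ)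
    (Z : Matrix (Fin n) (Fin p) ℝ) (hrank : Z.rank = r)
    (N : Matrix (Fin n) (Fin n) ℝ) (M : Matrix (Fin p) (Fin p) ℝ)
    (hN : N.PosDef) (hM : M.PosDef) :
    ∃ (U : Matrix (Fin n) (Fin r) ℝ) (V : Matrix (Fin p) (Fin r) ℝ) (σ : Fin r → ℝ),
      (∀ α, 0 < σ α) ∧ (∀ α β : Fin r, α ≤ β → σ β ≤ σ α) ∧
      Z = U * Matrix.diagonal σ * Vᵀ ∧
      Uᵀ * N * U = 1 ∧ Vᵀ * M * V = 1 := by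
  obtain ⟨S, hSsymm, hSN, hS⟩ := hN.exists_symm_sqrt
  obtain ⟨T, hTsymm, hTM, hT⟩ := hM.exists_symm_sqrt
  have hrank' : (S * Z * T).rank = r := by
    rw [rank_mul_eq_left_of_isUnit_det _ _ hT, rank_mul_eq_right_of_isUnit_det _ _ hS, hrank]
  obtain ⟨U, V, σ, hσ, hanti, hSZT, hU, hV⟩ := exists_compact_svd hrank'
  refine ⟨S⁻¹ * U, T⁻¹ * V, σ, hσ, fun _ _ h => hanti h, ?_,
    by rw [transpose_inv_mul_mul_inv_mul hSsymm hSN hS, hU],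
    by rw [transpose_inv_mul_mul_inv_mul hTsymm hTM hT, hV]⟩
  calc Z = S⁻¹ * (S * Z * T) * T⁻¹ := by
        rw [Matrix.mul_assoc, mul_nonsing_inv_cancel_right T _ hT,
          nonsing_inv_mul_cancel_left S Z hS]
    _ = S⁻¹ * U * diagonal σ * (T⁻¹ * V)ᵀ := by
        rw [hSZT, transpose_mul, transpose_nonsing_inv, hTsymm]
        simp only [Matrix.mul_assoc]

/-- Existence of the GSVD: For a real `n × p` matrix `Z` of rank `r ≥ 1`
and symmetric positive definite metrics `N` (`n × n`) and `M` (`p × p`), there exist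
`U : n × r`, `V : p × r` and `σ₁ ≥ … ≥ σ_r > 0` with `Z = U diag(σ) Vᵀ`,
`Uᵀ N U = I_r` and `Vᵀ M V = I_r`. -/
theorem gsvd_exists (n p r : ℕ) (hr : 1 ≤ r)
    (Z : Matrix (Fin n) (Fin p) ℝ) (hrank : Z.rank = r)
    (N : Matrix (Fin n) (Fin n) ℝ) (M : Matrix (Fin p) (Fin p) ℝ)
    (hN : N.PosDef) (hM : M.PosDef) :
    ∃ (U : Matrix (Fin n) (Fin r) ℝ) (V : Matrix (Fin p) (Fin r) ℝ) (σ : Fin r → ℝ),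
      (∀ α, 0 < σ α) ∧ (∀ α β : Fin r, α ≤ β → σ β ≤ σ α) ∧
      Z = U * Matrix.diagonal σ * Vᵀ ∧
      Uᵀ * N * U = 1 ∧ Vᵀ * M * V = 1 :=
  gsvd_exists_general n p r Z hrank N M hN hM
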